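/- arXiv:1406.2740 — 4 statements merged into one kernel-verified Lean document; each statement's English description precedes it below -/
import Mathlib

section
/- The boundary action of F_d is topologically free: for every w ∈ F_d \ {e}, the set {x ∈ ∂F_d : w·x ≠ x} is dense in ∂F_d. -/
/-- The alphabet of the free group on `d` generators: a generator together with
a sign (`true` = the generator itself, `false` = its inverse). -/
abbrev Letter (d : ℕ) := Fin d × Bool

/-- The inverse of a letter. -/
def Letter.inv {d : ℕ} (a : Letter d) : Letter d := (a.1, !a.2)

/-- A sequence of letters is reduced if no letter is followed by its inverse. -/
def IsReducedSeq {d : ℕ} (x : ℕ → Letter d) : Prop :=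
  ∀ n, x (n + 1) ≠ Letter.inv (x n)

/-- The boundary `∂F_d` of the free group on `d` generators: the space of
infinite reduced words, topologized as a subspace of the product space
`(Fin d × Bool)^ℕ` (each factor discrete). -/
abbrev Boundary (d : ℕ) := {x : ℕ → Letter d // IsReducedSeq x}

/-- The number of letters cancelled at the junction when the (finite reduced)
word `u` is concatenated with the infinite reduced word `x`. -/
def cancelLen {d : ℕ} (u : List (Letter d)) (x : ℕ → Letter d) : ℕ :=
  Nat.findGreatest (fun k => ∀ i < k, u[u.length - 1 - i]? = some (Letter.inv (x i))) u.length

/-- The reduction of the concatenation of a finite reduced word `u` with an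
infinite reduced word `x`. -/
def concatReduce {d : ℕ} (u : List (Letter d)) (x : ℕ → Letter d) : ℕ → Letter d :=
  fun n =>
    let k := cancelLen u x
    let m := u.length - k
    if h : n < m then u[n]'(by omega) else x (k + (n - m))

open Classical in
/-- The boundary action of the free group on its boundary: left multiplication
followed by free reduction.  (The `if` always takes the `then` branch, since the
reduction of the concatenation of reduced words is again reduced; hence this is
exactly the usual boundary action `g · x`.) -/
noncomputable def boundaryAct {d : ℕ} (g : FreeGroup (Fin d)) (x : Boundary d) : Boundary d :=
  if h : IsReducedSeq (concatReduce (FreeGroup.toWord g) x.1) then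
    ⟨concatReduce (FreeGroup.toWord g) x.1, h⟩
  else x

/-- `x` is the boundary point `w^{+∞}`, the limit of the sequence `(wⁿ)ₙ₌₁^∞`:
for every `k` there is `N` such that for all `n ≥ N` the reduced word of `wⁿ`
has length at least `k` and its first `k` letters agree with those of `x`.
The point `w^{-∞}` is `(w⁻¹)^{+∞}`, i.e. `IsPlusLimit w⁻¹`. -/
def IsPlusLimit {d : ℕ} (w : FreeGroup (Fin d)) (x : Boundary d) : Prop :=
  ∀ k : ℕ, ∃ N : ℕ, ∀ n ≥ N,
    k ≤ (FreeGroup.toWord (w ^ n)).length ∧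
    ∀ i < k, (FreeGroup.toWord (w ^ n))[i]? = some (x.1 i)

/-- The relation `R_W = Δ ∪ {(g·w^{+∞}, g·w^{-∞}) : g ∈ F_d, w ∈ W ∪ W⁻¹}`
on the boundary `∂F_d`. -/
def RW {d : ℕ} (W : Set (FreeGroup (Fin d))) : Set (Boundary d × Boundary d) :=
  {p | p.1 = p.2} ∪
  {p | ∃ (g w : FreeGroup (Fin d)) (xp xm : Boundary d),
      (w ∈ W ∨ w⁻¹ ∈ W) ∧ IsPlusLimit w xp ∧ IsPlusLimit w⁻¹ xm ∧
      p.1 = boundaryAct g xp ∧ p.2 = boundaryAct g xm}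

open Classical in
/-- `p[w]` : the (`ℤ`-valued) indicator function of the cylinder set of the
reduced word of `w` in the boundary. -/
noncomputable def pFun {d : ℕ} (w : FreeGroup (Fin d)) : Boundary d → ℤ :=
  fun x =>
    if ∀ i < (FreeGroup.toWord w).length, (FreeGroup.toWord w)[i]? = some (x.1 i) then 1 else 0

/-- `q[s] = p[s] + p[s⁻¹]` for a generator `s`. -/
noncomputable def qFun {d : ℕ} (s : Fin d) : Boundary d → ℤ :=
  fun x => pFun (FreeGroup.of s) x + pFun (FreeGroup.of s)⁻¹ x

/-- `q[sⁿ] = p[sⁿ] + p[s⁻ⁿ]` for a generator `s`. -/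
noncomputable def qPow {d : ℕ} (s : Fin d) (n : ℕ) : Boundary d → ℤ :=
  fun x => pFun (FreeGroup.of s ^ n) x + pFun ((FreeGroup.of s ^ n)⁻¹) x

/-- The map `w ↦ ŵ` flipping the sign of the exponent of the last syllable of
the reduced word of `w`: if `w = s_{i(1)}^{n(1)} ⋯ s_{i(k)}^{n(k)}` then
`ŵ = s_{i(1)}^{n(1)} ⋯ s_{i(k-1)}^{n(k-1)} s_{i(k)}^{-n(k)}`.  (The final
syllable is the maximal terminal run of equal letters of the reduced word.) -/
def hatWord {d : ℕ} (w : FreeGroup (Fin d)) : FreeGroup (Fin d) :=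
  match (FreeGroup.toWord w).reverse with
  | [] => w
  | a :: _ =>
    let k := ((FreeGroup.toWord w).reverse.takeWhile (fun b => b == a)).length
    FreeGroup.mk ((FreeGroup.toWord w).take ((FreeGroup.toWord w).length - k) ++
      List.replicate k (Letter.inv a))


/-!
If `w ≠ 1` fixes `x ∈ ∂F_d`, split the reduced word of `w` as `v v'` where `v'` is the part
cancelled against `x`, so that `x = v'⁻¹ x'` and `w · x = v x'`. Then `x = v x' = v'⁻¹ x'`,
so `x` is eventually periodic with period `||v| - |v'||`. The period is nonzero: otherwise
`v = v'⁻¹` (both are prefixes of `x`), and `v'⁻¹ v'` is not a nontrivial reduced word.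
On the other hand, with two generators any reduced prefix can be continued, by letters all of
the sign of its last letter, so as to spell out the indicator of the squares, which is not
eventually periodic. So every cylinder contains a point not fixed by `w`.
-/

open Filter

namespace Letter

variable {d : ℕ}

@[simp]
lemma inv_inv (a : Letter d) : a.inv.inv = a := by
  simp [Letter.inv]

lemma ne_inv_of_snd_eq {a b : Letter d} (h : a.2 = b.2) : b ≠ a.inv := by
  rintro rfl
  simp [Letter.inv] at h

end Letter

lemma FreeGroup.IsReduced.getElem_succ_ne_inv {d : ℕ} {L : List (Letter d)}
    (hL : FreeGroup.IsReduced L) {i : ℕ} (h : i + 1 < L.length) : L[i + 1] ≠ L[i].inv := by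
  intro heq
  have := List.isChain_iff_getElem.mp hL i h
  simp [heq, Letter.inv] at this

section cancelLen

variable {d : ℕ} (u : List (Letter d)) (x : ℕ → Letter d)

lemma cancelLen_le : cancelLen u x ≤ u.length :=
  Nat.findGreatest_le _

lemma getElem?_of_lt_cancelLen {i : ℕ} (hi : i < cancelLen u x) :
    u[u.length - 1 - i]? = some (x i).inv :=
  Nat.findGreatest_spec (P := fun k => ∀ i < k, u[u.length - 1 - i]? = some (x i).inv)
    (Nat.zero_le _) (fun _ h => absurd h (Nat.not_lt_zero _)) i hi

lemma getElem?_cancelLen_ne (h : cancelLen u x < u.length) :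
    u[u.length - 1 - cancelLen u x]? ≠ some (x (cancelLen u x)).inv := by
  intro heq
  refine Nat.findGreatest_is_greatest
    (P := fun k => ∀ i < k, u[u.length - 1 - i]? = some (x i).inv) (Nat.lt_succ_self _) h
    fun i hi => ?_
  rcases Nat.lt_succ_iff_lt_or_eq.mp hi with hi | rfl
  · exact getElem?_of_lt_cancelLen u x hi
  · exact heq

lemma concatReduce_of_lt {n : ℕ} (h : n < u.length - cancelLen u x) :
    concatReduce u x n = u[n] :=
  dif_pos h

lemma concatReduce_add (j : ℕ) :
    concatReduce u x (u.length - cancelLen u x + j) = x (cancelLen u x + j) := by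
  simp [concatReduce]

end cancelLen

lemma isReducedSeq_concatReduce {d : ℕ} {u : List (Letter d)} {x : ℕ → Letter d}
    (hu : FreeGroup.IsReduced u) (hx : IsReducedSeq x) : IsReducedSeq (concatReduce u x) := by
  have hk := cancelLen_le u x
  intro n
  rcases lt_trichotomy (n + 1) (u.length - cancelLen u x) with h | h | h
  · rw [concatReduce_of_lt u x h, concatReduce_of_lt u x (show n < _ by omega)]
    exact hu.getElem_succ_ne_inv (by omega)
  · have hn : n = u.length - 1 - cancelLen u x := by omega
    have hjunction : concatReduce u x (n + 1) = x (cancelLen u x) := by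
      simpa [h] using concatReduce_add u x 0
    rw [hjunction, concatReduce_of_lt u x (show n < _ by omega)]
    intro heq
    apply getElem?_cancelLen_ne u x (by omega)
    simp only [← hn, List.getElem?_eq_getElem (show n < u.length by omega), heq, Letter.inv_inv]
  · obtain ⟨j, rfl⟩ := Nat.exists_eq_add_of_le (Nat.le_of_lt_succ h)
    rw [add_assoc, concatReduce_add, concatReduce_add, ← add_assoc]
    exact hx _

lemma boundaryAct_coe {d : ℕ} (g : FreeGroup (Fin d)) (x : Boundary d) :
    (boundaryAct g x).1 = concatReduce g.toWord x.1 := by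
  rw [boundaryAct, dif_pos (isReducedSeq_concatReduce FreeGroup.isReduced_toWord x.2)]

def EventuallyPeriodic {α : Type*} (x : ℕ → α) : Prop :=
  ∃ p > 0, ∀ᶠ n in atTop, x (n + p) = x n

namespace EventuallyPeriodic

variable {α β : Type*} {x : ℕ → α}

lemma comp (h : EventuallyPeriodic x) (f : α → β) : EventuallyPeriodic (f ∘ x) :=
  let ⟨p, hp, hx⟩ := h
  ⟨p, hp, hx.mono fun _ => congrArg f⟩

lemma comp_add (h : EventuallyPeriodic x) (N : ℕ) : EventuallyPeriodic fun n => x (n + N) := by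
  obtain ⟨p, hp, hx⟩ := h
  refine ⟨p, hp, (tendsto_add_atTop_nat N).eventually hx |>.mono fun n hn => ?_⟩
  rwa [add_right_comm] at hn

lemma of_add_eq_add {a b : ℕ} (hab : a < b) (h : ∀ j, x (a + j) = x (b + j)) :
    EventuallyPeriodic x := by
  refine ⟨b - a, by omega, eventually_atTop.mpr ⟨a, fun n hn => ?_⟩⟩
  obtain ⟨j, rfl⟩ := Nat.exists_eq_add_of_le hn
  rw [h j, show a + j + (b - a) = b + j by omega]

end EventuallyPeriodic

lemma not_eventuallyPeriodic_ite_isSquare {α : Type*} {a b : α} (hab : a ≠ b) :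
    ¬ EventuallyPeriodic fun n => if IsSquare n then a else b := by
  rintro ⟨p, hp, hx⟩
  obtain ⟨M, hM⟩ := eventually_atTop.mp hx
  set m := max M p
  have hpm : p ≤ m := le_max_right M p
  have hsq : IsSquare (m * m) := ⟨m, rfl⟩
  have hnsq : ¬ IsSquare (m * m + p) := by
    rintro ⟨r, hr⟩
    refine Nat.not_exists_sq (m := m) (by omega) ?_ ⟨r, hr.symm⟩
    nlinarith
  have := hM (m * m) (le_trans (le_max_left M p) (Nat.le_mul_self m))
  simp only [hsq, hnsq, if_true, if_false] at this
  exact hab this.symm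

lemma eventuallyPeriodic_of_boundaryAct_eq {d : ℕ} {w : FreeGroup (Fin d)} (hw : w ≠ 1)
    {x : Boundary d} (hx : boundaryAct w x = x) : EventuallyPeriodic x.1 := by
  set u := w.toWord
  set k := cancelLen u x.1
  have hfix : concatReduce u x.1 = x.1 := by rw [← boundaryAct_coe, hx]
  have hprefix : ∀ n (h : n < u.length - k), u[n] = x.1 n := fun n h => by
    rw [← concatReduce_of_lt u x.1 h, hfix]
  have htail : ∀ j, x.1 (k + j) = x.1 (u.length - k + j) := fun j => by
    rw [← concatReduce_add u x.1 j, hfix]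
  have hne : k ≠ u.length - k := by
    intro heq
    have hu : 0 < u.length := List.length_pos_iff.mpr (FreeGroup.toWord_eq_nil_iff.not.mpr hw)
    have h1 := getElem?_of_lt_cancelLen u x.1 (i := k - 1) (by omega)
    rw [show u.length - 1 - (k - 1) = k - 1 + 1 by omega,
      List.getElem?_eq_getElem (show k - 1 + 1 < u.length by omega), Option.some_inj,
      ← hprefix (k - 1) (by omega)] at h1
    have hred : FreeGroup.IsReduced u := FreeGroup.isReduced_toWord
    exact hred.getElem_succ_ne_inv (i := k - 1) (by omega) h1
  rcases hne.lt_or_gt with hlt | hgt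
  · exact .of_add_eq_add hlt htail
  · exact .of_add_eq_add hgt fun j => (htail j).symm

lemma exists_mem_cylinder_not_eventuallyPeriodic {d : ℕ} (hd : 2 ≤ d) (x : Boundary d)
    (N : ℕ) :
    ∃ y : Boundary d, y.1 ∈ PiNat.cylinder x.1 N ∧ ¬ EventuallyPeriodic y.1 := by
  let s := (x.1 (N - 1)).2
  let f : ℕ → Fin d := fun n => if IsSquare n then ⟨0, by omega⟩ else ⟨1, hd⟩
  let y : ℕ → Letter d := fun n => if n < N then x.1 n else (f (n - N), s)
  have hsign : ∀ n, N ≤ n + 1 → (y n).2 = s := by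
    intro n hn
    by_cases h : n < N
    · obtain rfl : n = N - 1 := by omega
      simp [y, h, s]
    · simp [y, h]
  have hy : IsReducedSeq y := by
    intro n
    by_cases hn : n + 1 < N
    · simpa [y, hn, show n < N by omega] using x.2 n
    · exact Letter.ne_inv_of_snd_eq ((hsign n (by omega)).trans (hsign (n + 1) (by omega)).symm)
  refine ⟨⟨y, hy⟩, PiNat.mem_cylinder_iff.mpr fun i hi => if_pos hi, fun hper => ?_⟩
  have htail : (Prod.fst ∘ fun n => y (n + N)) = f := funext fun n => by simp [y]
  have hf := (hper.comp_add N).comp Prod.fst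
  rw [htail] at hf
  exact not_eventuallyPeriodic_ite_isSquare (by simp [Fin.ext_iff]) hf

lemma dense_of_forall_exists_mem_cylinder {α : Type*} [TopologicalSpace α] [DiscreteTopology α]
    {p : (ℕ → α) → Prop} {S : Set {x // p x}}
    (h : ∀ (x : {x // p x}) (n : ℕ), ∃ y ∈ S, y.1 ∈ PiNat.cylinder x.1 n) : Dense S := by
  refine (isTopologicalBasis_subtype (PiNat.isTopologicalBasis_cylinders fun _ => α) p).dense_iff
    |>.mpr ?_
  rintro _ ⟨_, ⟨z, n, rfl⟩, rfl⟩ ⟨x, hx⟩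
  obtain ⟨y, hyS, hy⟩ := h x n
  exact ⟨y, PiNat.mem_cylinder_iff_eq.mp hx ▸ hy, hyS⟩

/-- The boundary action of `F_d` is topologically free:
for every `w ∈ F_d \ {e}`, the set `{x ∈ ∂F_d : w·x ≠ x}` is dense. -/
theorem boundary_action_topologically_free (d : ℕ) (hd : 2 ≤ d)
    (w : FreeGroup (Fin d)) (hw : w ≠ 1) :
    Dense {x : Boundary d | boundaryAct w x ≠ x} :=
  dense_of_forall_exists_mem_cylinder fun x N =>
    let ⟨y, hyx, hy⟩ := exists_mem_cylinder_not_eventuallyPeriodic hd x N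
    ⟨y, fun hfix => hy (eventuallyPeriodic_of_boundaryAct_eq hw hfix), hyx⟩
end

section
/- For every subset W ⊆ F_d \ {e}, each equivalence class of the equivalence relation R_W contains at most two elements. -/
/-!
Suppose `(x, y)` and `(x, z)` lie in `R_W` with `y, z ≠ x`. Then `x = v^{+∞}` and `y = v^{-∞}`
for a conjugate `v = g w g⁻¹`, since `g · w^{±∞} = (g w g⁻¹)^{±∞}`; likewise `x = v'^{+∞}` and
`z = v'^{-∞}`. Writing the reduced word of `v` as `P C P⁻¹` with `C` cyclically reduced, we get
`v^{+∞} = P C C C ⋯` and `v^{-∞} = P C⁻¹ C⁻¹ ⋯`. The word `P` is the shortest prefix after which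
`v^{+∞}` is periodic, so `x` determines it, and reading the periodic tail of `x` backwards along a
common multiple of the periods `|C|` and `|C'|` gives the tail of both `y` and `z`. Hence `y = z`.
-/

open Filter FreeGroup reduceCyclically

theorem Nat.mod_eq_sub_one_sub_mod_of_dvd {p j k : ℕ} (hp : 0 < p) (h : p ∣ j + k + 1) :
    k % p = p - 1 - j % p := by
  have hj := Nat.mod_lt j hp
  have hk := Nat.mod_lt k hp
  have hdvd : p ∣ j % p + k % p + 1 := by
    have e : j + k + 1 = j % p + k % p + 1 + p * (j / p + k / p) := by
      have := Nat.mod_add_div j p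
      have := Nat.mod_add_div k p
      rw [mul_add]
      omega
    rw [e] at h
    exact (Nat.dvd_add_left (dvd_mul_right p _)).mp h
  have := Nat.eq_of_dvd_of_lt_two_mul (by omega) hdvd (by omega)
  omega

theorem List.getElem?_flatten_replicate {α : Type*} (L : List α) {n j : ℕ}
    (hj : j < n * L.length) : (List.replicate n L).flatten[j]? = L[j % L.length]? := by
  induction n generalizing j with
  | zero => simp at hj
  | succ n ih =>
    rw [List.replicate_succ, List.flatten_cons]
    rcases lt_or_ge j L.length with h | h
    · rw [List.getElem?_append_left h, Nat.mod_eq_of_lt h]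
    · rw [List.getElem?_append_right h, ih (by rw [Nat.succ_mul] at hj; omega),
        ← Nat.mod_eq_sub_mod h]

namespace FreeGroup

variable {α : Type*}

theorem getElem?_invRev {L : List (α × Bool)} {i : ℕ} (hi : i < L.length) :
    (invRev L)[i]? = L[L.length - 1 - i]?.map fun a => (a.1, !a.2) := by
  rw [invRev, List.getElem?_reverse (by simpa), List.getElem?_map, List.length_map]

theorem invRev_flatten_replicate (L : List (α × Bool)) (n : ℕ) :
    invRev (List.replicate n L).flatten = (List.replicate n (invRev L)).flatten := by
  induction n with
  | zero => rfl
  | succ n ih =>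
    rw [List.replicate_succ, List.flatten_cons, invRev_append, ih, ← List.flatten_concat,
      ← List.replicate_succ']

variable [DecidableEq α]

theorem IsReduced.exists_cancel {M N : List (α × Bool)} (hM : IsReduced M) (hN : IsReduced N) :
    ∃ A S B, M = A ++ S ∧ N = invRev S ++ B ∧ IsReduced (A ++ B) := by
  induction N generalizing M with
  | nil => exact ⟨M, [], [], by simp, by simp, by simpa using hM⟩
  | cons b N ih =>
    rcases M.eq_nil_or_concat with rfl | ⟨M, a, rfl⟩
    · exact ⟨[], [], b :: N, by simp, by simp, by simpa using hN⟩
    rw [List.concat_eq_append] at hM ⊢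
    by_cases hab : b = (a.1, !a.2)
    · obtain ⟨A, S, B, rfl, rfl, hAB⟩ :=
        ih (M := M) (hM.infix ⟨[], [a], by simp⟩) (hN.infix ⟨[b], [], by simp⟩)
      exact ⟨A, S ++ [a], B, by simp, by simp [invRev, hab], hAB⟩
    · refine ⟨M ++ [a], [], b :: N, by simp, by simp, ?_⟩
      refine IsReduced.append_overlap (L₂ := [a]) hM ?_ (List.cons_ne_nil _ _)
      refine isReduced_cons_cons.mpr ⟨fun h1 => ?_, hN⟩
      revert hab
      obtain ⟨a1, a2⟩ := a
      obtain ⟨b1, b2⟩ := b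
      cases a2 <;> cases b2 <;> simp_all

theorem reduce_append_invRev_append {A S B : List (α × Bool)} (h : IsReduced (A ++ B)) :
    reduce (A ++ S ++ (invRev S ++ B)) = A ++ B := by
  rw [← h.reduce_eq]
  apply reduce.sound
  simp only [← mul_mk, ← inv_mk]
  group

theorem exists_toWord_mul (x y : FreeGroup α) :
    ∃ A S B, x.toWord = A ++ S ∧ y.toWord = invRev S ++ B ∧ (x * y).toWord = A ++ B := by
  obtain ⟨A, S, B, hx, hy, hAB⟩ := isReduced_toWord.exists_cancel (isReduced_toWord (x := y))
  refine ⟨A, S, B, hx, hy, ?_⟩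
  rw [toWord_mul, hx, hy, reduce_append_invRev_append hAB]

theorem getElem?_toWord_mul_of_lt (x y : FreeGroup α) {i : ℕ}
    (hi : i + y.toWord.length < x.toWord.length) : (x * y).toWord[i]? = x.toWord[i]? := by
  obtain ⟨A, S, B, hx, hy, hxy⟩ := exists_toWord_mul x y
  have hS : S.length ≤ y.toWord.length := by simp [hy]
  have hiA : i < A.length := by simp [hx] at hi; omega
  rw [hxy, hx, List.getElem?_append_left hiA, List.getElem?_append_left hiA]

theorem toWord_pow_of_ne_zero (v : FreeGroup α) {n : ℕ} (hn : n ≠ 0) :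
    (v ^ n).toWord = conjugator v.toWord ++
      (List.replicate n (reduceCyclically v.toWord)).flatten ++ invRev (conjugator v.toWord) := by
  rw [toWord_pow, reduce_flatten_replicate isReduced_toWord, if_neg hn]

theorem toWord_inv_pow_of_ne_zero (v : FreeGroup α) {n : ℕ} (hn : n ≠ 0) :
    (v⁻¹ ^ n).toWord = conjugator v.toWord ++
      (List.replicate n (invRev (reduceCyclically v.toWord))).flatten ++
        invRev (conjugator v.toWord) := by
  rw [inv_pow, toWord_inv, toWord_pow_of_ne_zero v hn]
  simp only [invRev_append, invRev_invRev, invRev_flatten_replicate, List.append_assoc]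

theorem getElem?_eq_of_toWord_pow {v : FreeGroup α} {P C Q : List (α × Bool)} (hC : C ≠ [])
    (hv : ∀ n ≠ 0, (v ^ n).toWord = P ++ (List.replicate n C).flatten ++ Q)
    {z : ℕ → α × Bool} (hz : ∀ i, ∀ᶠ n in atTop, (v ^ n).toWord[i]? = some (z i)) :
    (∀ i < P.length, P[i]? = some (z i)) ∧ ∀ j, C[j % C.length]? = some (z (P.length + j)) := by
  have key (i : ℕ) :
      ∃ n, i < n * C.length ∧ (P ++ (List.replicate n C).flatten)[i]? = some (z i) := by
    obtain ⟨n, hzn, hin⟩ := ((hz i).and (eventually_gt_atTop i)).exists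
    have hlen : i < n * C.length :=
      lt_of_lt_of_le hin (Nat.le_mul_of_pos_right n (List.length_pos_iff.mpr hC))
    refine ⟨n, hlen, ?_⟩
    rwa [hv n (by omega), List.getElem?_append_left (by simp; omega)] at hzn
  refine ⟨fun i hi => ?_, fun j => ?_⟩
  · obtain ⟨n, -, hn⟩ := key i
    rwa [List.getElem?_append_left hi] at hn
  · obtain ⟨n, hjn, hn⟩ := key (P.length + j)
    rwa [List.getElem?_append_right (by omega), Nat.add_sub_cancel_left,
      List.getElem?_flatten_replicate _ (by omega)] at hn

end FreeGroup

variable {d : ℕ}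

@[simp] theorem Letter.inv_inv_s8 (a : Letter d) : a.inv.inv = a := by
  simp [Letter.inv]

theorem FreeGroup.IsReduced.getElem?_succ_ne_inv {L : List (Letter d)} (h : IsReduced L)
    {i : ℕ} {a b : Letter d} (ha : L[i]? = some a) (hb : L[i + 1]? = some b) : b ≠ a.inv := by
  obtain ⟨hi, rfl⟩ := List.getElem?_eq_some_iff.mp hb
  obtain rfl := Option.some.inj ((List.getElem?_eq_getElem (by omega)).symm.trans ha)
  intro hinv
  have := List.IsChain.getElem h i hi
  rw [hinv] at this
  simp [Letter.inv] at this

theorem isPlusLimit_iff_eventually {w : FreeGroup (Fin d)} {x : Boundary d} :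
    IsPlusLimit w x ↔ ∀ i, ∀ᶠ n in atTop, (w ^ n).toWord[i]? = some (x.1 i) := by
  refine ⟨fun h i => ?_, fun h k => ?_⟩
  · obtain ⟨N, hN⟩ := h (i + 1)
    filter_upwards [eventually_ge_atTop N] with n hn using (hN n hn).2 i (lt_add_one i)
  · have hall : ∀ᶠ n in atTop, ∀ i ∈ Set.Iio k, (w ^ n).toWord[i]? = some (x.1 i) :=
      (Set.finite_Iio k).eventually_all.mpr fun i _ => h i
    obtain ⟨N, hN⟩ := eventually_atTop.mp hall
    refine ⟨N, fun n hn => ⟨?_, fun i hi => hN n hn i hi⟩⟩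
    rcases k with _ | k
    · exact Nat.zero_le _
    · exact (List.getElem?_eq_some_iff.mp (hN n hn k (lt_add_one k))).1

theorem isReducedSeq_of_eventually {v : FreeGroup (Fin d)} {z : ℕ → Letter d}
    (h : ∀ i, ∀ᶠ n in atTop, (v ^ n).toWord[i]? = some (z i)) : IsReducedSeq z := by
  intro i
  obtain ⟨n, hi, hi'⟩ := ((h i).and (h (i + 1))).exists
  exact isReduced_toWord.getElem?_succ_ne_inv hi hi'

/-- `(x, y) = (v^{+∞}, v^{-∞})` for `v = P C P⁻¹` with `C` cyclically reduced, `u = |P|` and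
`p = |C|`: after the common prefix `P`, `x` runs through `C` periodically and `y` through `C⁻¹`. -/
structure IsAxisEnds (u p : ℕ) (x y : ℕ → Letter d) : Prop where
  pos : 0 < p
  periodic : Function.Periodic (fun j => x (u + j)) p
  eq_of_lt : ∀ n < u, y n = x n
  eq_inv_of_dvd : ∀ j k, p ∣ j + k + 1 → y (u + j) = (x (u + k)).inv

namespace IsAxisEnds

variable {u p u' p' : ℕ} {x y y' : ℕ → Letter d}

/-- Minimality of the prefix `P`: since `y` is reduced, the last letters of `P` and `C` differ. -/
theorem apply_pred_add_ne (h : IsAxisEnds u p x y) (hy : IsReducedSeq y) (hu : 0 < u) :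
    x (u - 1 + p) ≠ x (u - 1) := by
  intro hx
  have hp := h.pos
  have hy' := hy (u - 1)
  have e := h.eq_inv_of_dvd 0 (p - 1) ⟨1, by omega⟩
  rw [add_zero] at e
  rw [Nat.sub_add_cancel hu, h.eq_of_lt (u - 1) (by omega), ← hx] at hy'
  exact hy' (by rw [e, show u + (p - 1) = u - 1 + p by omega])

theorem le_of_isAxisEnds (h : IsAxisEnds u p x y) (hy : IsReducedSeq y)
    (h' : IsAxisEnds u' p' x y') : u ≤ u' := by
  by_contra! hlt
  apply h.apply_pred_add_ne hy (by omega)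
  have hq : 0 < p * p' := mul_pos h.pos h'.pos
  have per' := h'.periodic.nat_mul p
  rw [Nat.cast_id] at per'
  -- `u - 1 ≥ u'`, so both `x (u - 1)` and `x (u - 1 + p)` equal `x (u - 1 + p * p')`
  have e1 : x (u - 1 + p * p') = x (u - 1) := by
    have := per' (u - 1 - u')
    simp only at this
    rwa [show u' + (u - 1 - u' + p * p') = u - 1 + p * p' by omega,
      show u' + (u - 1 - u') = u - 1 by omega] at this
  have e2 : x (u - 1 + p + p * p') = x (u - 1 + p) := by
    have := per' (u - 1 + p - u')
    simp only at this
    rwa [show u' + (u - 1 + p - u' + p * p') = u - 1 + p + p * p' by omega,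
      show u' + (u - 1 + p - u') = u - 1 + p by omega] at this
  have e3 : x (u - 1 + p * p' + p) = x (u - 1 + p * p') := by
    have := h.periodic (u - 1 + p * p' - u)
    simp only at this
    rwa [show u + (u - 1 + p * p' - u + p) = u - 1 + p * p' + p by omega,
      show u + (u - 1 + p * p' - u) = u - 1 + p * p' by omega] at this
  rw [← e2, ← e1, ← e3, add_right_comm]

theorem right_unique (h : IsAxisEnds u p x y) (h' : IsAxisEnds u' p' x y')
    (hy : IsReducedSeq y) (hy' : IsReducedSeq y') : y = y' := by
  obtain rfl : u = u' := le_antisymm (h.le_of_isAxisEnds hy h') (h'.le_of_isAxisEnds hy' h)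
  funext n
  rcases lt_or_ge n u with hn | hn
  · rw [h.eq_of_lt n hn, h'.eq_of_lt n hn]
  obtain ⟨j, rfl⟩ := Nat.exists_eq_add_of_le hn
  -- pair `j` with a `k` such that `j + k + 1` is a common multiple of both periods
  obtain ⟨k, hk⟩ := Nat.exists_eq_add_of_le
    (Nat.le_mul_of_pos_left (j + 1) (mul_pos h.pos h'.pos))
  rw [h.eq_inv_of_dvd j k ⟨p' * (j + 1), by rw [← mul_assoc, hk]; ring⟩,
    h'.eq_inv_of_dvd j k ⟨p * (j + 1), by rw [← mul_assoc, mul_comm p', hk]; ring⟩]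

end IsAxisEnds

theorem IsPlusLimit.isAxisEnds {v : FreeGroup (Fin d)} {x y : Boundary d}
    (hx : IsPlusLimit v x) (hy : IsPlusLimit v⁻¹ y) :
    IsAxisEnds (conjugator v.toWord).length (reduceCyclically v.toWord).length x.1 y.1 := by
  have hv (n : ℕ) (hn : n ≠ 0) := toWord_pow_of_ne_zero v hn
  have hv' (n : ℕ) (hn : n ≠ 0) := toWord_inv_pow_of_ne_zero v hn
  generalize conjugator v.toWord = P at hv hv' ⊢
  generalize reduceCyclically v.toWord = C at hv hv' ⊢
  rw [isPlusLimit_iff_eventually] at hx hy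
  have hC : C ≠ [] := by
    rintro rfl
    obtain ⟨n, hn, hn0⟩ := ((hx (2 * P.length)).and (eventually_ne_atTop 0)).exists
    rw [hv n hn0, List.getElem?_eq_some_iff] at hn
    obtain ⟨hlt, -⟩ := hn
    simp at hlt
    omega
  obtain ⟨hxP, hxC⟩ := getElem?_eq_of_toWord_pow hC hv hx
  obtain ⟨hyP, hyC⟩ :=
    getElem?_eq_of_toWord_pow (C := invRev C) (by simpa [invRev] using hC) hv' hy
  have hp : 0 < C.length := List.length_pos_iff.mpr hC
  refine ⟨hp, fun j => ?_, fun n hn => ?_, fun j k hjk => ?_⟩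
  · have := hxC (j + C.length)
    rw [Nat.add_mod_right, hxC j] at this
    exact (Option.some.inj this).symm
  · exact Option.some.inj ((hyP n hn).symm.trans (hxP n hn))
  · have hy := hyC j
    rw [invRev_length, getElem?_invRev (Nat.mod_lt j hp),
      ← Nat.mod_eq_sub_one_sub_mod_of_dvd hp hjk, hxC k] at hy
    exact (Option.some.inj hy).symm

theorem eq_of_isPlusLimit_inv {v v' : FreeGroup (Fin d)} {x y y' : Boundary d}
    (hx : IsPlusLimit v x) (hy : IsPlusLimit v⁻¹ y)
    (hx' : IsPlusLimit v' x) (hy' : IsPlusLimit v'⁻¹ y') : y = y' :=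
  Subtype.ext ((hx.isAxisEnds hy).right_unique (hx'.isAxisEnds hy') y.2 y'.2)

theorem getElem?_toWord_mul_eq_concatReduce (g h : FreeGroup (Fin d)) {x : ℕ → Letter d}
    {K : ℕ} (hx : ∀ i < g.toWord.length + K, h.toWord[i]? = some (x i)) :
    ∀ i < K, (g * h).toWord[i]? = some (concatReduce g.toWord x i) := by
  obtain ⟨A, S, B, hg, hh, hgh⟩ := exists_toWord_mul g h
  have hlen : g.toWord.length = A.length + S.length := by simp [hg]
  have hmatch : ∀ i < S.length, g.toWord[g.toWord.length - 1 - i]? = some (x i).inv := by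
    intro i hi
    have e := hx i (by omega)
    rw [hh, List.getElem?_append_left (by simpa), getElem?_invRev hi] at e
    obtain ⟨a, ha, hxa⟩ := Option.map_eq_some_iff.mp e
    rw [show g.toWord.length - 1 - i = A.length + (S.length - 1 - i) by omega, hg,
      List.getElem?_append_right (by omega), Nat.add_sub_cancel_left, ha, ← hxa]
    simp [Letter.inv]
  have hcancel : cancelLen g.toWord x = S.length := by
    refine Nat.findGreatest_eq_iff.mpr ⟨by omega, fun _ => hmatch, fun n hn hng hP => ?_⟩
    -- a longer cancellation would cancel the last letter of `A` against the first one of `B`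
    have eA := hP S.length hn
    rw [show g.toWord.length - 1 - S.length = A.length - 1 by omega, hg,
      List.getElem?_append_left (by omega)] at eA
    have eB := hx S.length (by omega)
    rw [hh, List.getElem?_append_right (by simp), invRev_length, Nat.sub_self] at eB
    refine (hgh ▸ isReduced_toWord).getElem?_succ_ne_inv (i := A.length - 1) ?_ ?_
      (Letter.inv_inv_s8 (x S.length)).symm
    · rwa [List.getElem?_append_left (by omega)]
    · rwa [List.getElem?_append_right (by omega), show A.length - 1 + 1 - A.length = 0 by omega]
  intro i hi
  simp only [concatReduce, hcancel, hgh]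
  split_ifs with hiA
  · rw [← List.getElem?_eq_getElem, hg, List.getElem?_append_left (by omega),
      List.getElem?_append_left (by omega)]
  · rw [List.getElem?_append_right (by omega), ← hx _ (by omega), hh,
      List.getElem?_append_right (by simp), invRev_length]
    congr 1
    omega

theorem eventually_toWord_conj_pow {g w : FreeGroup (Fin d)} {x : Boundary d}
    (hx : IsPlusLimit w x) (i : ℕ) :
    ∀ᶠ n in atTop, ((g * w * g⁻¹) ^ n).toWord[i]? = some (concatReduce g.toWord x.1 i) := by
  obtain ⟨N, hN⟩ := hx (2 * g.toWord.length + i + 1)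
  filter_upwards [eventually_ge_atTop N] with n hn
  obtain ⟨hlen, hpre⟩ := hN n hn
  rw [conj_pow, mul_assoc]
  refine getElem?_toWord_mul_eq_concatReduce g _ (K := i + 1) (fun j hj => ?_) i (lt_add_one i)
  rw [getElem?_toWord_mul_of_lt _ _ (by simp only [toWord_inv, invRev_length]; omega)]
  exact hpre j (by omega)

theorem IsPlusLimit.conj {g w : FreeGroup (Fin d)} {x : Boundary d} (hx : IsPlusLimit w x) :
    IsPlusLimit (g * w * g⁻¹) (boundaryAct g x) := by
  have hred : IsReducedSeq (concatReduce g.toWord x.1) :=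
    isReducedSeq_of_eventually (eventually_toWord_conj_pow hx)
  rw [isPlusLimit_iff_eventually, boundaryAct, dif_pos hred]
  exact eventually_toWord_conj_pow hx

theorem boundaryAct_eq_of_isPlusLimit {g g' w w' : FreeGroup (Fin d)}
    {xp xm xp' xm' : Boundary d} (hp : IsPlusLimit w xp) (hm : IsPlusLimit w⁻¹ xm)
    (hp' : IsPlusLimit w' xp') (hm' : IsPlusLimit w'⁻¹ xm')
    (h : boundaryAct g xp = boundaryAct g' xp') : boundaryAct g xm = boundaryAct g' xm' := by
  have conj_inv (a b : FreeGroup (Fin d)) : (a * b * a⁻¹)⁻¹ = a * b⁻¹ * a⁻¹ := by group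
  refine eq_of_isPlusLimit_inv hp.conj ?_ (h ▸ hp'.conj) ?_
  · rw [conj_inv]
    exact hm.conj
  · rw [conj_inv]
    exact hm'.conj

theorem eq_of_mem_RW {W : Set (FreeGroup (Fin d))} {x a b : Boundary d} (ha : (x, a) ∈ RW W)
    (hb : (x, b) ∈ RW W) (hax : a ≠ x) (hbx : b ≠ x) : a = b := by
  obtain ha | ⟨g, w, xp, xm, -, hp, hm, hx, rfl⟩ := ha
  · exact absurd ha.symm hax
  obtain hb | ⟨g', w', xp', xm', -, hp', hm', hx', rfl⟩ := hb
  · exact absurd hb.symm hbx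
  exact boundaryAct_eq_of_isPlusLimit hp hm hp' hm' (hx.symm.trans hx')

theorem RW_classes_at_most_two_general (d : ℕ) (W : Set (FreeGroup (Fin d))) :
    ∀ x y z u : Boundary d,
      (x, y) ∈ RW W → (x, z) ∈ RW W → (x, u) ∈ RW W →
      y = z ∨ y = u ∨ z = u := by
  intro x y z u hy hz hu
  have hyz := eq_of_mem_RW hy hz
  have hyu := eq_of_mem_RW hy hu
  have hzu := eq_of_mem_RW hz hu
  by_cases hyx : y = x <;> by_cases hzx : z = x <;> grind

/-- For every subset `W ⊆ F_d \ {e}`, each equivalence class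
of `R_W` contains at most two elements. -/
theorem RW_classes_at_most_two (d : ℕ) (hd : 2 ≤ d)
    (W : Set (FreeGroup (Fin d))) (hW : ∀ w ∈ W, w ≠ 1) :
    ∀ x y z u : Boundary d,
      (x, y) ∈ RW W → (x, z) ∈ RW W → (x, u) ∈ RW W →
      y = z ∨ y = u ∨ z = u :=
  RW_classes_at_most_two_general d W
end

section
/- Let x, y ∈ F_d be distinct elements with |x| = |y|, and let w ∈ F_d satisfy |x w y^{-1}| = |x| + |w| + |y|. Then for every n ≥ 1, the first |x| letters of the reduced word of (x w y^{-1})^n equal the reduced word of x, and the first |y| letters of the reduced word of (x w y^{-1})^{-n} equal the reduced word of y; consequently the first |x| letters of (x w y^{-1})^{+∞} equal the reduced word of x and the first |y| letters of (x w y^{-1})^{-∞} equal the reduced word of y. -/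
/-!
Write `g = a w b⁻¹`. Its reduced word is `A W B` with `B` the word of `b⁻¹`. Cyclic reduction
writes it as `P C P⁻¹` with `C` cyclically reduced, and then the reduced word of `gⁿ` (`n ≥ 1`)
is `P Cⁿ P⁻¹`, so `P C` is a prefix of every positive power. If `|P| ≥ |A|`, then `A` is a prefix
of `P`, so `A⁻¹` is a suffix of `A W B` of length `|B|`, forcing `b = a`. Hence `|P| < |A|`, `A` is
a prefix of `P C`, and the limit `g^{+∞}` inherits it. The case of `g⁻¹ = b w⁻¹ a⁻¹` is symmetric.
-/

theorem List.IsPrefix.getElem?_eq {α : Type*} {l₁ l₂ : List α} (h : l₁ <+: l₂) {i : ℕ}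
    (hi : i < l₁.length) : l₂[i]? = l₁[i]? := by
  rw [List.prefix_iff_getElem?.mp h i hi, List.getElem?_eq_getElem hi]

namespace FreeGroup

open reduceCyclically

variable {α : Type*} [DecidableEq α]

theorem toWord_mul_mul_eq_append {x y z : FreeGroup α}
    (h : (x * y * z).toWord.length = x.toWord.length + y.toWord.length + z.toWord.length) :
    (x * y * z).toWord = x.toWord ++ y.toWord ++ z.toWord :=
  ((toWord_mul_sublist _ _).trans ((toWord_mul_sublist _ _).append_right _)).eq_of_length
    (by simp [h, Nat.add_assoc])

theorem conjugator_append_reduceCyclically_prefix (L : List (α × Bool)) :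
    conjugator L ++ reduceCyclically L <+: L := by
  conv_rhs => rw [← conj_conjugator_reduceCyclically L]
  exact List.prefix_append _ _

theorem invRev_conjugator_suffix (L : List (α × Bool)) : invRev (conjugator L) <:+ L := by
  conv_rhs => rw [← conj_conjugator_reduceCyclically L]
  exact List.suffix_append _ _

theorem conjugator_append_reduceCyclically_prefix_toWord_pow (x : FreeGroup α) {n : ℕ}
    (hn : n ≠ 0) :
    conjugator x.toWord ++ reduceCyclically x.toWord <+: (x ^ n).toWord := by
  obtain ⟨n, rfl⟩ := Nat.exists_eq_add_one_of_ne_zero hn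
  rw [toWord_pow, reduce_flatten_replicate_succ isReduced_toWord, List.replicate_succ,
    List.flatten_cons]
  simp only [List.append_assoc, List.prefix_append_right_inj]
  exact List.prefix_append _ _

theorem prefix_toWord_pow_of_prefix {x : FreeGroup α} {L : List (α × Bool)}
    (hL : L <+: x.toWord) (hlen : L.length + (conjugator x.toWord).length ≤ x.toWord.length)
    {n : ℕ} (hn : n ≠ 0) : L <+: (x ^ n).toWord := by
  have hdecomp := congrArg List.length (conj_conjugator_reduceCyclically x.toWord)
  simp only [List.length_append, invRev_length] at hdecomp
  refine (List.prefix_of_prefix_length_le hL (conjugator_append_reduceCyclically_prefix _) ?_).trans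
    (conjugator_append_reduceCyclically_prefix_toWord_pow x hn)
  rw [List.length_append]
  omega

theorem length_conjugator_lt {A M B : List (α × Bool)} (hAB : A.length = B.length)
    (hne : B ≠ invRev A) : (conjugator (A ++ M ++ B)).length < A.length := by
  by_contra! hle
  obtain ⟨T, hT⟩ : A <+: conjugator (A ++ M ++ B) :=
    List.prefix_of_prefix_length_le ((List.prefix_append _ _).trans (List.prefix_append _ _))
      ((List.prefix_append _ _).trans (conjugator_append_reduceCyclically_prefix _)) hle
  have hinv : invRev A <:+ A ++ M ++ B := by
    refine List.IsSuffix.trans ?_ (invRev_conjugator_suffix _)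
    rw [← hT, invRev_append]
    exact List.suffix_append _ _
  exact hne ((List.suffix_of_suffix_length_le hinv (List.suffix_append _ _)
    (by rw [invRev_length, hAB])).eq_of_length (by rw [invRev_length, hAB])).symm

theorem toWord_prefix_toWord_mul_mul_inv_pow {a w b : FreeGroup α} (hab : a ≠ b)
    (hlen : a.toWord.length = b.toWord.length)
    (hgeo : (a * w * b⁻¹).toWord.length = a.toWord.length + w.toWord.length + b.toWord.length)
    {n : ℕ} (hn : n ≠ 0) : a.toWord <+: ((a * w * b⁻¹) ^ n).toWord := by
  have hb : b⁻¹.toWord.length = b.toWord.length := by rw [toWord_inv, invRev_length]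
  have hword : (a * w * b⁻¹).toWord = a.toWord ++ w.toWord ++ b⁻¹.toWord :=
    toWord_mul_mul_eq_append (by rw [hgeo, hb])
  have hconj : (conjugator (a.toWord ++ w.toWord ++ b⁻¹.toWord)).length < a.toWord.length := by
    refine length_conjugator_lt (hlen.trans hb.symm) ?_
    rw [toWord_inv, Ne, invRev_injective.eq_iff, toWord_inj]
    exact hab.symm
  refine prefix_toWord_pow_of_prefix ?_ ?_ hn
  · rw [hword, List.append_assoc]
    exact List.prefix_append _ _
  · rw [hword]
    simp only [List.length_append] at hconj ⊢
    omega

end FreeGroup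

theorem IsPlusLimit.getElem?_eq_of_prefix_toWord_pow {d : ℕ} {x : FreeGroup (Fin d)}
    {xp : Boundary d} (hx : IsPlusLimit x xp) {L : List (Letter d)}
    (hL : ∀ n ≠ 0, L <+: (x ^ n).toWord) (i : ℕ) (hi : i < L.length) :
    some (xp.1 i) = L[i]? := by
  obtain ⟨N, hN⟩ := hx L.length
  rw [← (hN (N + 1) N.le_succ).2 i hi]
  exact (hL (N + 1) N.succ_ne_zero).getElem?_eq hi

theorem prefix_of_powers_and_limits_general (d : ℕ)
    (a b w : FreeGroup (Fin d)) (hab : a ≠ b)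
    (hlen : (FreeGroup.toWord a).length = (FreeGroup.toWord b).length)
    (hgeo : (FreeGroup.toWord (a * w * b⁻¹)).length =
      (FreeGroup.toWord a).length + (FreeGroup.toWord w).length +
        (FreeGroup.toWord b).length) :
    (∀ n : ℕ, 1 ≤ n →
      (∀ i < (FreeGroup.toWord a).length,
        (FreeGroup.toWord ((a * w * b⁻¹) ^ n))[i]? = (FreeGroup.toWord a)[i]?) ∧
      (∀ i < (FreeGroup.toWord b).length,
        (FreeGroup.toWord (((a * w * b⁻¹)⁻¹) ^ n))[i]? = (FreeGroup.toWord b)[i]?)) ∧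
    (∀ xp : Boundary d, IsPlusLimit (a * w * b⁻¹) xp →
      ∀ i < (FreeGroup.toWord a).length,
        some (xp.1 i) = (FreeGroup.toWord a)[i]?) ∧
    (∀ xm : Boundary d, IsPlusLimit (a * w * b⁻¹)⁻¹ xm →
      ∀ i < (FreeGroup.toWord b).length,
        some (xm.1 i) = (FreeGroup.toWord b)[i]?) := by
  have hinv : (a * w * b⁻¹)⁻¹ = b * w⁻¹ * a⁻¹ := by group
  have hgeo' : (b * w⁻¹ * a⁻¹).toWord.length =
      b.toWord.length + w⁻¹.toWord.length + a.toWord.length := by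
    rw [← hinv, FreeGroup.toWord_inv, FreeGroup.invRev_length, hgeo, FreeGroup.toWord_inv w,
      FreeGroup.invRev_length]
    omega
  have hpow (n : ℕ) (hn : n ≠ 0) : a.toWord <+: ((a * w * b⁻¹) ^ n).toWord :=
    FreeGroup.toWord_prefix_toWord_mul_mul_inv_pow hab hlen hgeo hn
  have hpow_inv (n : ℕ) (hn : n ≠ 0) : b.toWord <+: ((a * w * b⁻¹)⁻¹ ^ n).toWord :=
    hinv ▸ FreeGroup.toWord_prefix_toWord_mul_mul_inv_pow hab.symm hlen.symm hgeo' hn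
  exact ⟨fun n hn => ⟨fun i => (hpow n (by omega)).getElem?_eq,
      fun i => (hpow_inv n (by omega)).getElem?_eq⟩,
    fun xp hxp => hxp.getElem?_eq_of_prefix_toWord_pow hpow,
    fun xm hxm => hxm.getElem?_eq_of_prefix_toWord_pow hpow_inv⟩

/-- Let `a, b ∈ F_d` be distinct with `|a| = |b|`, and let
`w ∈ F_d` satisfy `|a w b⁻¹| = |a| + |w| + |b|`.  Then for every `n ≥ 1` the
first `|a|` letters of `(a w b⁻¹)ⁿ` equal the reduced word of `a` and the first
`|b|` letters of `(a w b⁻¹)⁻ⁿ` equal the reduced word of `b`; consequently the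
same holds for `(a w b⁻¹)^{+∞}` and `(a w b⁻¹)^{-∞}`. -/
theorem prefix_of_powers_and_limits (d : ℕ) (hd : 2 ≤ d)
    (a b w : FreeGroup (Fin d)) (hab : a ≠ b)
    (hlen : (FreeGroup.toWord a).length = (FreeGroup.toWord b).length)
    (hgeo : (FreeGroup.toWord (a * w * b⁻¹)).length =
      (FreeGroup.toWord a).length + (FreeGroup.toWord w).length +
        (FreeGroup.toWord b).length) :
    (∀ n : ℕ, 1 ≤ n →
      (∀ i < (FreeGroup.toWord a).length,
        (FreeGroup.toWord ((a * w * b⁻¹) ^ n))[i]? = (FreeGroup.toWord a)[i]?) ∧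
      (∀ i < (FreeGroup.toWord b).length,
        (FreeGroup.toWord (((a * w * b⁻¹)⁻¹) ^ n))[i]? = (FreeGroup.toWord b)[i]?)) ∧
    (∀ xp : Boundary d, IsPlusLimit (a * w * b⁻¹) xp →
      ∀ i < (FreeGroup.toWord a).length,
        some (xp.1 i) = (FreeGroup.toWord a)[i]?) ∧
    (∀ xm : Boundary d, IsPlusLimit (a * w * b⁻¹)⁻¹ xm →
      ∀ i < (FreeGroup.toWord b).length,
        some (xm.1 i) = (FreeGroup.toWord b)[i]?) :=
  prefix_of_powers_and_limits_general d a b w hab hlen hgeo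
end

section
/- The quotient space ∂F_d/R_S, equipped with the quotient topology, is homeomorphic to the Cantor set {0,1}^ℕ (equivalently, it is a nonempty compact metrizable totally disconnected space without isolated points). -/
open Function Filter Topology FreeGroup

/-- The complete prefix code `0, 10, 110, …, 1ᵏ⁻¹0, 1ᵏ` (with `0 = false`, `1 = true`). -/
def combCode : (k : ℕ) → Fin (k + 1) → List Bool
  | 0, _ => []
  | k + 1, i => Fin.cases [false] (fun j => true :: combCode k j) i

theorem combCode_ne_nil {k : ℕ} (i : Fin (k + 2)) : combCode (k + 1) i ≠ [] := by
  cases i using Fin.cases <;> simp [combCode]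

theorem combCode_append_bijective (k : ℕ) :
    Bijective fun p : Fin (k + 1) × (ℕ → Bool) => (combCode k p.1 ++ₛ p.2).get := by
  induction k with
  | zero => exact ⟨fun p q h => Prod.ext (Subsingleton.elim (α := Fin 1) _ _) h,
      fun c => ⟨(0, c), rfl⟩⟩
  | succ k ih =>
    constructor
    · rintro ⟨i, c⟩ ⟨i', c'⟩ h
      cases i using Fin.cases with
      | zero => cases i' using Fin.cases with
        | zero => exact Prod.ext rfl (congrArg Stream'.tail h)
        | succ j' => exact absurd (congrFun h 0) Bool.false_ne_true
      | succ j => cases i' using Fin.cases with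
        | zero => exact absurd (congrFun h 0).symm Bool.false_ne_true
        | succ j' =>
          obtain ⟨rfl, rfl⟩ := Prod.ext_iff.1 (ih.1 (a₁ := (j, c)) (a₂ := (j', c'))
            (congrArg Stream'.tail h))
          rfl
    · intro b
      cases hb : b 0
      · refine ⟨(0, Stream'.tail b), funext fun n => ?_⟩
        cases n
        exacts [hb.symm, rfl]
      · obtain ⟨⟨j, c⟩, hjc⟩ := ih.2 (Stream'.tail b)
        refine ⟨(j.succ, c), funext fun n => ?_⟩
        cases n
        exacts [hb.symm, congrFun hjc _]

theorem Stream'.continuous_append {α : Type*} [TopologicalSpace α] (l : List α) :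
    Continuous fun s : ℕ → α => (l ++ₛ s).get := by
  induction l with
  | nil => exact continuous_id
  | cons a l ih =>
    refine continuous_pi fun n => ?_
    cases n with
    | zero => exact continuous_const
    | succ n => exact (continuous_apply n).comp ih

noncomputable def finProdCantorHomeomorph (k : ℕ) : Fin (k + 1) × (ℕ → Bool) ≃ₜ (ℕ → Bool) :=
  Continuous.homeoOfEquivCompactToT2 (f := Equiv.ofBijective _ (combCode_append_bijective k))
    (continuous_prod_of_discrete_left.2 fun i => Stream'.continuous_append (combCode k i))

section Digits

variable {α X : Type*} [TopologicalSpace α] [TopologicalSpace X]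

/-- Repeatedly splitting off the first coordinate of `T.symm` expands a point of `X` into a stream
of digits in `α`. -/
def Homeomorph.prodDigits (T : α × X ≃ₜ X) (x : X) (n : ℕ) : α :=
  (T.symm ((Prod.snd ∘ T.symm)^[n] x)).1

variable (T : α × X ≃ₜ X)

theorem Homeomorph.prodDigits_zero (x : X) : T.prodDigits x 0 = (T.symm x).1 := rfl

theorem Homeomorph.prodDigits_succ (x : X) (n : ℕ) :
    T.prodDigits x (n + 1) = T.prodDigits (T.symm x).2 n := by
  simp only [prodDigits, iterate_succ_apply, comp_apply]

theorem Homeomorph.continuous_prodDigits : Continuous T.prodDigits :=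
  continuous_pi fun n => continuous_fst.comp <| T.symm.continuous.comp <|
    (continuous_snd.comp T.symm.continuous).iterate n

theorem Homeomorph.prodDigits_surjective [T2Space α] [CompactSpace X] [Nonempty X] :
    Surjective T.prodDigits := by
  have approx : ∀ N (s : ℕ → α), ∃ x, ∀ i < N, T.prodDigits x i = s i := by
    intro N
    induction N with
    | zero => exact fun _ => ⟨Classical.arbitrary X, by simp⟩
    | succ N ih =>
      intro s
      obtain ⟨x, hx⟩ := ih (fun i => s (i + 1))
      refine ⟨T (s 0, x), fun i hi => ?_⟩
      cases i with
      | zero => simp [prodDigits_zero]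
      | succ i => simpa [prodDigits_succ] using hx i (by omega)
  intro s
  choose x hx using approx
  have hlim : Tendsto (fun N => T.prodDigits (x N s)) atTop (𝓝 s) :=
    tendsto_pi_nhds.2 fun i => tendsto_const_nhds.congr' <|
      (eventually_gt_atTop i).mono fun N hN => (hx N s i hN).symm
  exact (isCompact_range T.continuous_prodDigits).isClosed.mem_of_tendsto hlim
    (Eventually.of_forall fun N => Set.mem_range_self _)

end Digits

theorem Homeomorph.prodDigits_injective {α β : Type*} [TopologicalSpace α] [TopologicalSpace β]
    (T : α × (ℕ → β) ≃ₜ (ℕ → β)) (code : α → List β) (hT : ∀ a c, T (a, c) = (code a ++ₛ c).get)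
    (hcode : ∀ a, code a ≠ []) : Injective T.prodDigits := by
  suffices ∀ j x y, T.prodDigits x = T.prodDigits y → x j = y j from
    fun x y h => funext fun j => this j x y h
  intro j
  induction j using Nat.strong_induction_on with
  | _ j ih =>
  intro x y h
  obtain ⟨⟨a, c⟩, rfl⟩ := T.surjective x
  obtain ⟨⟨a', c'⟩, rfl⟩ := T.surjective y
  have ha : a = a' := by simpa [prodDigits_zero] using congrFun h 0
  subst ha
  have hc : T.prodDigits c = T.prodDigits c' := funext fun n => by
    simpa [prodDigits_succ] using congrFun h (n + 1)
  rw [hT, hT]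
  by_cases hj : j < (code a).length
  · exact (Stream'.get_append_left j _ c hj).trans (Stream'.get_append_left j _ c' hj).symm
  · obtain ⟨i, rfl⟩ := Nat.exists_eq_add_of_le (not_lt.1 hj)
    have hi : i < (code a).length + i := by have := List.length_pos_iff.2 (hcode a); omega
    exact (Stream'.get_append_right i _ c).trans
      ((ih i hi c c' hc).trans (Stream'.get_append_right i _ c').symm)

theorem nonempty_piNat_homeomorph_cantorSpace (α : Type*) [Finite α] [Nontrivial α]
    [TopologicalSpace α] [DiscreteTopology α] : Nonempty ((ℕ → α) ≃ₜ (ℕ → Bool)) := by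
  obtain ⟨k, hk⟩ : ∃ k, Nat.card α = k + 2 := ⟨Nat.card α - 2, by
    have := Finite.one_lt_card (α := α); omega⟩
  let T := finProdCantorHomeomorph (k + 1)
  have hbij : Bijective T.prodDigits :=
    ⟨T.prodDigits_injective (combCode (k + 1)) (fun _ _ => rfl) combCode_ne_nil,
      T.prodDigits_surjective⟩
  let e : α ≃ Fin (k + 2) := (Finite.equivFin α).trans (finCongr hk)
  exact ⟨(Homeomorph.piCongrRight fun _ => e.toHomeomorphOfDiscrete).trans
    (T.continuous_prodDigits.homeoOfEquivCompactToT2 (f := Equiv.ofBijective _ hbij)).symm⟩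

section Letters

variable {d : ℕ}

@[simp] theorem Letter.inv_fst (a : Letter d) : a.inv.1 = a.1 := rfl

theorem Letter.ne_inv_self (a : Letter d) : a ≠ a.inv := by
  simp [Letter.inv, Prod.ext_iff]

theorem Letter.ne_inv_iff {a b : Letter d} : b ≠ a.inv ↔ (a.1 = b.1 → a.2 = b.2) := by
  obtain ⟨i, s⟩ := a; obtain ⟨j, t⟩ := b
  cases s <;> cases t <;> simp [Letter.inv, eq_comm]

theorem Letter.eq_or_eq_inv_of_fst_eq {a b : Letter d} (h : b.1 = a.1) : b = a ∨ b = a.inv := by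
  obtain ⟨i, s⟩ := a; obtain ⟨j, t⟩ := b
  cases s <;> cases t <;> simp_all [Letter.inv]

theorem IsReducedSeq.eq_of_fst_eq {x : ℕ → Letter d} (hx : IsReducedSeq x) {k : ℕ}
    (h : (x (k + 1)).1 = (x k).1) : x (k + 1) = x k :=
  Prod.ext h (Letter.ne_inv_iff.1 (hx k) h.symm).symm

theorem Stream'.get_append_const {α : Type*} (v : List α) (a : α) (k : ℕ) :
    (v ++ₛ Stream'.const a).get k = if h : k < v.length then v[k] else a := by
  split_ifs with h
  · exact Stream'.get_append_left k v _ h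
  · obtain ⟨i, rfl⟩ := Nat.exists_eq_add_of_le (not_lt.1 h)
    exact Stream'.get_append_right i v _

theorem isReducedSeq_append_const {v : List (Letter d)} (hv : IsReduced v) {a : Letter d}
    (hlast : ∀ b ∈ v.getLast?, b.1 ≠ a.1) : IsReducedSeq (v ++ₛ Stream'.const a).get := by
  intro k
  simp only [Stream'.get_append_const]
  split_ifs with hk1 hk hk
  · exact Letter.ne_inv_iff.2 (List.isChain_iff_getElem.1 hv k hk1)
  · omega
  · have hvk := hlast _ (List.getLast_mem_getLast? (List.ne_nil_of_length_pos (by omega)))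
    rw [List.getLast_eq_getElem] at hvk
    intro hc
    exact hvk (by simp only [hc, Letter.inv_fst, show v.length - 1 = k by omega])
  · exact a.ne_inv_self

end Letters

theorem Nat.findGreatest_succ_eq_of_shift {P Q : ℕ → Prop} [DecidablePred P] [DecidablePred Q]
    {n : ℕ} (h0 : P 0) (hPQ : ∀ k ≤ n, Q (k + 1) ↔ P k) :
    Nat.findGreatest Q (n + 1) = Nat.findGreatest P n + 1 := by
  induction n with
  | zero => simp [(hPQ 0 le_rfl).2 h0]
  | succ n ih =>
    rw [Nat.findGreatest_succ (P := Q), ih fun k hk => hPQ k (by omega),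
      Nat.findGreatest_succ (P := P)]
    simp only [hPQ (n + 1) le_rfl]
    split_ifs <;> rfl

section ConcatReduce

variable {d : ℕ}

theorem cancelLen_const_eq_zero {u : List (Letter d)} {a : Letter d}
    (h : ∀ b ∈ u.getLast?, b ≠ a.inv) : cancelLen u (fun _ => a) = 0 := by
  refine Nat.findGreatest_eq_zero_iff.2 fun k hk hku hP => ?_
  have hlast := hP 0 hk
  rw [Nat.sub_zero, ← List.getLast?_eq_getElem?] at hlast
  exact h _ hlast rfl

theorem cancelLen_append_inv_const (u : List (Letter d)) (a : Letter d) :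
    cancelLen (u ++ [a.inv]) (fun _ => a) = cancelLen u (fun _ => a) + 1 := by
  unfold cancelLen
  rw [List.length_append, List.length_singleton]
  refine Nat.findGreatest_succ_eq_of_shift (fun _ h => absurd h (Nat.not_lt_zero _)) fun k hk => ?_
  have shift : ∀ i < k, (u ++ [a.inv])[u.length + 1 - 1 - (i + 1)]? = u[u.length - 1 - i]? :=
    fun i hi => by rw [List.getElem?_append_left (by omega)]; congr 1; omega
  constructor
  · intro h i hi
    rw [← shift i hi]
    exact h (i + 1) (by omega)
  · intro h i hi
    cases i with
    | zero => simp
    | succ i => rw [shift i (by omega)]; exact h i (by omega)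

theorem concatReduce_const_of_getLast_ne {u : List (Letter d)} {a : Letter d}
    (h : ∀ b ∈ u.getLast?, b ≠ a.inv) :
    concatReduce u (fun _ => a) = (u ++ₛ Stream'.const a).get := by
  funext k
  simp [concatReduce, cancelLen_const_eq_zero h, Stream'.get_append_const]

theorem concatReduce_append_inv_const (u : List (Letter d)) (a : Letter d) :
    concatReduce (u ++ [a.inv]) (fun _ => a) = concatReduce u (fun _ => a) := by
  funext k
  have hle : cancelLen u (fun _ => a) ≤ u.length := Nat.findGreatest_le _
  simp only [concatReduce, cancelLen_append_inv_const, List.length_append, List.length_singleton]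
  split_ifs with h1 h2 h2
  · exact List.getElem_append_left _
  · omega
  · omega
  · rfl

theorem concatReduce_const {u : List (Letter d)} (hu : IsReduced u) (a : Letter d) :
    concatReduce u (fun _ => a) = (u.rdropWhile (fun b => b.1 = a.1) ++ₛ Stream'.const a).get := by
  induction u using List.reverseRecOn with
  | nil => exact concatReduce_const_of_getLast_ne (by simp)
  | append_singleton u e ih =>
    have hu' : IsReduced u := hu.infix ⟨[], [e], by simp⟩
    by_cases he : e.1 = a.1
    · rw [List.rdropWhile_concat_pos _ _ _ (by simpa using he), ← ih hu']
      rcases Letter.eq_or_eq_inv_of_fst_eq he with rfl | rfl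
      · have hlast : ∀ b ∈ u.getLast?, b ≠ e.inv := by
          rintro b hb rfl
          have := (List.isChain_append.1 hu).2.2 _ hb e (by simp)
          simp [Letter.inv] at this
        rw [concatReduce_const_of_getLast_ne hlast, concatReduce_const_of_getLast_ne (by simpa
          using e.ne_inv_self), Stream'.append_append_stream, Stream'.append_eq_cons,
          ← Stream'.const_eq]
      · exact concatReduce_append_inv_const u a
    · rw [List.rdropWhile_concat_neg _ _ _ (by simpa using he)]
      exact concatReduce_const_of_getLast_ne (by rintro b hb rfl; simp_all)

end ConcatReduce

section Relation

variable {d : ℕ}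

def Boundary.const (a : Letter d) : Boundary d := ⟨fun _ => a, fun _ => a.ne_inv_self⟩

theorem toWord_mk_singleton_pow (a : Letter d) (n : ℕ) :
    (FreeGroup.mk [a] ^ n).toWord = List.replicate n a := by
  have : FreeGroup.mk [a] ^ n = FreeGroup.mk (List.replicate n a) := by
    induction n with
    | zero => rfl
    | succ n ih => rw [pow_succ, ih, FreeGroup.mul_mk, List.replicate_succ']
  rw [this, FreeGroup.toWord_mk, IsReduced.reduce_eq (List.isChain_replicate_of_rel n fun _ => rfl)]

theorem inv_mk_singleton (a : Letter d) : (FreeGroup.mk [a])⁻¹ = FreeGroup.mk [a.inv] := by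
  rw [FreeGroup.inv_mk]; rfl

theorem isPlusLimit_mk_singleton_iff (a : Letter d) (x : Boundary d) :
    IsPlusLimit (FreeGroup.mk [a]) x ↔ x = Boundary.const a := by
  simp only [IsPlusLimit, toWord_mk_singleton_pow, List.length_replicate, List.getElem?_replicate]
  constructor
  · intro h
    refine Subtype.ext (funext fun k => ?_)
    obtain ⟨N, hN⟩ := h (k + 1)
    have := (hN (max N (k + 1)) (le_max_left _ _)).2 k (by omega)
    rw [if_pos (by omega)] at this
    exact (Option.some_injective _ this).symm
  · rintro rfl k
    exact ⟨k, fun n hn => ⟨hn, fun i hi => by rw [if_pos (by omega)]; rfl⟩⟩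

theorem mem_range_of_or_inv_mem_iff (w : FreeGroup (Fin d)) :
    (w ∈ Set.range FreeGroup.of ∨ w⁻¹ ∈ Set.range FreeGroup.of) ↔ ∃ a : Letter d, w = FreeGroup.mk [a] := by
  constructor
  · rintro (⟨i, rfl⟩ | ⟨i, hi⟩)
    · exact ⟨(i, true), rfl⟩
    · exact ⟨(i, false), by rw [← inv_inv w, ← hi]; exact inv_mk_singleton (i, true)⟩
  · rintro ⟨⟨i, s⟩, rfl⟩
    cases s
    · exact Or.inr ⟨i, by rw [inv_mk_singleton]; rfl⟩
    · exact Or.inl ⟨i, rfl⟩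

theorem fst_ne_of_mem_getLast?_rdropWhile {u : List (Letter d)} {a b : Letter d}
    (hb : b ∈ (u.rdropWhile fun c => c.1 = a.1).getLast?) : b.1 ≠ a.1 := by
  obtain ⟨hne, rfl⟩ := List.mem_getLast?_eq_getLast hb
  simpa using List.rdropWhile_last_not _ _ hne

theorem boundaryAct_const (g : FreeGroup (Fin d)) (a : Letter d) :
    (boundaryAct g (Boundary.const a)).1 =
      (g.toWord.rdropWhile (fun b => b.1 = a.1) ++ₛ Stream'.const a).get := by
  have h := concatReduce_const (isReduced_toWord (x := g)) a
  have hred : IsReducedSeq (concatReduce g.toWord (Boundary.const a).1) := by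
    rw [Boundary.const, h]
    exact isReducedSeq_append_const (isReduced_toWord.infix (List.rdropWhile_prefix _ _).isInfix)
      fun _ => fst_ne_of_mem_getLast?_rdropWhile
  rw [boundaryAct, dif_pos hred]
  exact h

theorem mem_RW_range_of_iff (x y : Boundary d) :
    (x, y) ∈ RW (Set.range (FreeGroup.of : Fin d → FreeGroup (Fin d))) ↔ x = y ∨
      ∃ (v : List (Letter d)) (a : Letter d), IsReduced v ∧ (∀ b ∈ v.getLast?, b.1 ≠ a.1) ∧
        x.1 = (v ++ₛ Stream'.const a).get ∧ y.1 = (v ++ₛ Stream'.const a.inv).get := by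
  constructor
  · rintro (h | ⟨g, w, xp, xm, hw, hp, hm, rfl, rfl⟩)
    · exact Or.inl h
    obtain ⟨a, rfl⟩ := (mem_range_of_or_inv_mem_iff w).1 hw
    rw [isPlusLimit_mk_singleton_iff] at hp
    rw [inv_mk_singleton, isPlusLimit_mk_singleton_iff] at hm
    subst hp hm
    exact Or.inr ⟨_, a, isReduced_toWord.infix (List.rdropWhile_prefix _ _).isInfix,
      fun _ => fst_ne_of_mem_getLast?_rdropWhile,
      boundaryAct_const g a, boundaryAct_const g a.inv⟩
  · rintro (rfl | ⟨v, a, hv, hlast, hx, hy⟩)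
    · exact Or.inl rfl
    have hact : ∀ c : Letter d, c.1 = a.1 →
        (boundaryAct (FreeGroup.mk v) (Boundary.const c)).1 = (v ++ₛ Stream'.const c).get := by
      intro c hc
      rw [boundaryAct_const, toWord_mk, hv.reduce_eq, List.rdropWhile_eq_self_iff.2]
      exact fun hne => by simpa [hc] using hlast _ (List.getLast_mem_getLast? hne)
    exact Or.inr ⟨FreeGroup.mk v, FreeGroup.mk [a], Boundary.const a, Boundary.const a.inv,
      (mem_range_of_or_inv_mem_iff _).2 ⟨a, rfl⟩, (isPlusLimit_mk_singleton_iff a _).2 rfl,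
      by rw [inv_mk_singleton, isPlusLimit_mk_singleton_iff],
      Subtype.ext (hx.trans (hact a rfl).symm), Subtype.ext (hy.trans (hact a.inv rfl).symm)⟩

end Relation

section SyllableCode

variable {n : ℕ}

/-- `inl ()`: the generator does not change; `inr (s, j)`: the syllable ending with `p` has sign
`s` and the next generator is the `j`-th one different from `p.1`. -/
def transition (p q : Letter (n + 1)) : Unit ⊕ Bool × Fin n :=
  if h : q.1 = p.1 then .inl () else .inr (p.2, (finSuccAboveEquiv p.1).symm ⟨q.1, h⟩)

theorem transition_eq_transition_iff {p p' q q' : Letter (n + 1)} (hp : p.1 = p'.1) :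
    transition p q = transition p' q' ↔ q.1 = q'.1 ∧ (q.1 ≠ p.1 → p.2 = p'.2) := by
  obtain ⟨i, s⟩ := p
  obtain ⟨i', s'⟩ := p'
  obtain rfl : i = i' := hp
  unfold transition
  by_cases hq : q.1 = i <;> by_cases hq' : q'.1 = i <;>
    simp [hq, hq', Subtype.ext_iff]
  · exact fun h => hq' h.symm
  · exact and_comm

def syllableCode (x : ℕ → Letter (n + 1)) : Fin (n + 1) × (ℕ → Unit ⊕ Bool × Fin n) :=
  ((x 0).1, fun k => transition (x k) (x (k + 1)))

theorem syllableCode_eq_iff {x y : ℕ → Letter (n + 1)} :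
    syllableCode x = syllableCode y ↔
      (∀ k, (x k).1 = (y k).1) ∧ ∀ k, (x (k + 1)).1 ≠ (x k).1 → (x k).2 = (y k).2 := by
  simp only [syllableCode, Prod.ext_iff, funext_iff]
  constructor
  · rintro ⟨h0, hstep⟩
    have hfst : ∀ k, (x k).1 = (y k).1 := fun k => by
      induction k with
      | zero => exact h0
      | succ k ih => exact ((transition_eq_transition_iff ih).1 (hstep k)).1
    exact ⟨hfst, fun k => ((transition_eq_transition_iff (hfst k)).1 (hstep k)).2⟩
  · rintro ⟨hfst, hsnd⟩
    exact ⟨hfst 0, fun k => (transition_eq_transition_iff (hfst k)).2 ⟨hfst (k + 1), hsnd k⟩⟩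

theorem syllableCode_append_const_inv (v : List (Letter (n + 1))) (a : Letter (n + 1)) :
    syllableCode (v ++ₛ Stream'.const a).get = syllableCode (v ++ₛ Stream'.const a.inv).get := by
  refine syllableCode_eq_iff.2 ⟨fun k => ?_, fun k hk => ?_⟩
  · simp only [Stream'.get_append_const]
    split_ifs <;> rfl
  · simp only [Stream'.get_append_const] at hk ⊢
    split_ifs at hk ⊢ <;> first | rfl | omega

theorem IsReducedSeq.isReduced_ofFn {d : ℕ} {x : ℕ → Letter d} (hx : IsReducedSeq x) (k : ℕ) :
    IsReduced (List.ofFn fun i : Fin k => x i) :=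
  List.isChain_iff_getElem.2 fun i hi => by
    simpa using Letter.ne_inv_iff.1 (hx i)

theorem ofFn_append_const_eq {α : Type*} {z : ℕ → α} {k : ℕ} {a : α}
    (hz : ∀ m, z (k + m) = a) : ((List.ofFn fun i : Fin k => z i) ++ₛ Stream'.const a).get = z := by
  funext m
  rw [Stream'.get_append_const]
  split_ifs with hm
  · simp
  · obtain ⟨i, rfl⟩ := Nat.exists_eq_add_of_le (not_lt.1 (by simpa using hm))
    exact (hz i).symm

theorem tail_const_of_syllableCode_eq {x y : ℕ → Letter (n + 1)} (hx : IsReducedSeq x)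
    (hy : IsReducedSeq y) (h : syllableCode x = syllableCode y) {k : ℕ} (hk : x k ≠ y k) :
    ∀ m, x (k + m) = x k ∧ y (k + m) = y k := by
  obtain ⟨hfst, hsnd⟩ := syllableCode_eq_iff.1 h
  intro m
  induction m with
  | zero => exact ⟨rfl, rfl⟩
  | succ m ih =>
    have hx' : (x (k + m + 1)).1 = (x (k + m)).1 := by
      by_contra hne
      exact hk (ih.1 ▸ ih.2 ▸ Prod.ext (hfst _) (hsnd _ hne))
    have hy' : (y (k + m + 1)).1 = (y (k + m)).1 := by rw [← hfst, ← hfst, hx']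
    exact ⟨(hx.eq_of_fst_eq hx').trans ih.1, (hy.eq_of_fst_eq hy').trans ih.2⟩

theorem eq_or_exists_of_syllableCode_eq {x y : Boundary (n + 1)}
    (h : syllableCode x.1 = syllableCode y.1) :
    x = y ∨ ∃ (v : List (Letter (n + 1))) (a : Letter (n + 1)), IsReduced v ∧
      (∀ b ∈ v.getLast?, b.1 ≠ a.1) ∧
        x.1 = (v ++ₛ Stream'.const a).get ∧ y.1 = (v ++ₛ Stream'.const a.inv).get := by
  classical
  by_cases hxy : x = y
  · exact Or.inl hxy
  have hex : ∃ k, x.1 k ≠ y.1 k := by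
    by_contra! hc
    exact hxy (Subtype.ext (funext hc))
  set k := Nat.find hex
  have hk : x.1 k ≠ y.1 k := Nat.find_spec hex
  have hbefore : ∀ i < k, x.1 i = y.1 i := fun i hi => not_not.1 (Nat.find_min hex hi)
  have htail := tail_const_of_syllableCode_eq x.2 y.2 h hk
  have hfst := (syllableCode_eq_iff.1 h).1
  have hyk : y.1 k = (x.1 k).inv :=
    (Letter.eq_or_eq_inv_of_fst_eq (hfst k).symm).resolve_left (Ne.symm hk)
  have hprefix : (List.ofFn fun i : Fin k => y.1 i) = List.ofFn fun i : Fin k => x.1 i :=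
    List.ofFn_inj.2 (funext fun i => (hbefore i i.2).symm)
  refine Or.inr ⟨List.ofFn fun i : Fin k => x.1 i, x.1 k, x.2.isReduced_ofFn k,
    fun b hb hba => hk ?_, (ofFn_append_const_eq fun m => (htail m).1).symm,
    (hprefix ▸ hyk ▸ ofFn_append_const_eq fun m => (htail m).2).symm⟩
  obtain ⟨hne, rfl⟩ := List.mem_getLast?_eq_getLast hb
  obtain ⟨j, hj⟩ : ∃ j, k = j + 1 := Nat.exists_eq_succ_of_ne_zero (by simpa using hne)
  replace hba : (x.1 (j + 1)).1 = (x.1 j).1 := by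
    rw [List.getLast_ofFn] at hba
    simpa [hj] using hba.symm
  rw [hj, x.2.eq_of_fst_eq hba, y.2.eq_of_fst_eq (by rw [← hfst, ← hfst, hba])]
  exact hbefore j (by omega)

end SyllableCode

section Decoding

variable {n : ℕ}

def decodeGen (c : Fin (n + 1)) (σ : ℕ → Unit ⊕ Bool × Fin n) : ℕ → Fin (n + 1)
  | 0 => c
  | k + 1 => (σ k).elim (fun _ => decodeGen c σ k) fun p => (decodeGen c σ k).succAbove p.2

open Classical in
/-- The sign of a letter is the one recorded at the first generator change at or after it. -/
noncomputable def decodeSign (σ : ℕ → Unit ⊕ Bool × Fin n) (k : ℕ) : Bool :=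
  if h : ∃ m, k ≤ m ∧ (σ m).isRight then (σ (Nat.find h)).elim (fun _ => true) Prod.fst else true

theorem decodeSign_of_eq_inr {σ : ℕ → Unit ⊕ Bool × Fin n} {k : ℕ} {p : Bool × Fin n}
    (hk : σ k = .inr p) : decodeSign σ k = p.1 := by
  classical
  have h : ∃ m, k ≤ m ∧ (σ m).isRight := ⟨k, le_rfl, by simp [hk]⟩
  have hfind : Nat.find h = k :=
    le_antisymm (Nat.find_min' h ⟨le_rfl, by simp [hk]⟩) (Nat.find_spec h).1
  simp [decodeSign, h, hfind, hk]

theorem decodeSign_succ_of_eq_inl {σ : ℕ → Unit ⊕ Bool × Fin n} {k : ℕ} (hk : σ k = .inl ()) :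
    decodeSign σ (k + 1) = decodeSign σ k := by
  classical
  have hiff : ∀ {m}, k + 1 ≤ m ∧ (σ m).isRight ↔ k ≤ m ∧ (σ m).isRight := fun {m} => by
    rcases eq_or_ne m k with rfl | hm
    · simp [hk]
    · simp [lt_iff_le_and_ne, Ne.symm hm]
  by_cases h : ∃ m, k ≤ m ∧ (σ m).isRight
  · have h' : ∃ m, k + 1 ≤ m ∧ (σ m).isRight := h.imp fun _ => hiff.2
    simp only [decodeSign, dif_pos h, dif_pos h']
    rw [Nat.find_congr' hiff]
  · have h' : ¬∃ m, k + 1 ≤ m ∧ (σ m).isRight := fun h' => h (h'.imp fun _ => hiff.1)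
    simp only [decodeSign, dif_neg h, dif_neg h']

noncomputable def decodeSeq (c : Fin (n + 1)) (σ : ℕ → Unit ⊕ Bool × Fin n) (k : ℕ) :
    Letter (n + 1) :=
  (decodeGen c σ k, decodeSign σ k)

theorem isReducedSeq_decodeSeq (c : Fin (n + 1)) (σ : ℕ → Unit ⊕ Bool × Fin n) :
    IsReducedSeq (decodeSeq c σ) := by
  intro k
  cases hk : σ k with
  | inl u =>
    have : decodeSeq c σ (k + 1) = decodeSeq c σ k := by
      simp [decodeSeq, decodeGen, hk, decodeSign_succ_of_eq_inl hk]
    rw [this]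
    exact Letter.ne_inv_self _
  | inr p =>
    intro h
    have := congrArg Prod.fst h
    simp [decodeSeq, decodeGen, hk, Letter.inv] at this

theorem syllableCode_decodeSeq (c : Fin (n + 1)) (σ : ℕ → Unit ⊕ Bool × Fin n) :
    syllableCode (decodeSeq c σ) = (c, σ) := by
  refine Prod.ext rfl (funext fun k => ?_)
  simp only [syllableCode, transition, decodeSeq]
  cases hk : σ k with
  | inl u => simp [decodeGen, hk]
  | inr p =>
    obtain ⟨b, j⟩ := p
    simp [decodeGen, hk, decodeSign_of_eq_inr hk]
    exact (finSuccAboveEquiv _).symm_apply_apply j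

theorem syllableCode_surjective :
    Surjective fun x : Boundary (n + 1) => syllableCode x.1 :=
  fun ⟨c, σ⟩ => ⟨⟨decodeSeq c σ, isReducedSeq_decodeSeq c σ⟩, syllableCode_decodeSeq c σ⟩

end Decoding

theorem continuous_syllableCode {n : ℕ} : Continuous (syllableCode (n := n)) :=
  (continuous_fst.comp (continuous_apply 0)).prodMk <| continuous_pi fun k =>
    (continuous_of_discreteTopology (f := uncurry transition)).comp
      (((continuous_apply k).prodMk (continuous_apply (k + 1))) :
        Continuous fun x : ℕ → Letter (n + 1) => (x k, x (k + 1)))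

theorem isClosed_setOf_isReducedSeq {d : ℕ} : IsClosed {x : ℕ → Letter d | IsReducedSeq x} := by
  have : {x : ℕ → Letter d | IsReducedSeq x} =
      ⋂ k, (fun x => (x k, x (k + 1))) ⁻¹' {p | p.2 ≠ p.1.inv} := by
    ext x
    simp [IsReducedSeq]
  rw [this]
  exact isClosed_iInter fun k => (isClosed_discrete _).preimage
    ((continuous_apply k).prodMk (continuous_apply (k + 1)))

instance {d : ℕ} : CompactSpace (Boundary d) :=
  isCompact_iff_compactSpace.1 isClosed_setOf_isReducedSeq.isCompact

theorem syllableCode_eq_iff_mem_RW {n : ℕ} (x y : Boundary (n + 1)) :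
    syllableCode x.1 = syllableCode y.1 ↔
      (x, y) ∈ RW (Set.range (FreeGroup.of : Fin (n + 1) → FreeGroup (Fin (n + 1)))) := by
  rw [mem_RW_range_of_iff]
  refine ⟨eq_or_exists_of_syllableCode_eq, ?_⟩
  rintro (rfl | ⟨v, a, -, -, hx, hy⟩)
  · rfl
  · rw [hx, hy, syllableCode_append_const_inv]

/-- The quotient space `∂F_d/R_S`, with the quotient
topology, is homeomorphic to the Cantor set `{0,1}^ℕ`. -/
theorem quotient_by_RS_homeomorphic_cantor (d : ℕ) (hd : 2 ≤ d)
    (hequiv : Equivalence fun x y : Boundary d =>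
      (x, y) ∈ RW (Set.range (FreeGroup.of : Fin d → FreeGroup (Fin d)))) :
    Nonempty
      ((Quotient (⟨fun x y => (x, y) ∈
          RW (Set.range (FreeGroup.of : Fin d → FreeGroup (Fin d))), hequiv⟩ :
        Setoid (Boundary d))) ≃ₜ (ℕ → Bool)) := by
  obtain ⟨n, rfl⟩ : ∃ n, d = n + 1 := ⟨d - 1, by omega⟩
  let F := Quotient.lift (s := ⟨_, hequiv⟩) (fun x => syllableCode x.1)
    fun x y h => (syllableCode_eq_iff_mem_RW x y).2 h
  have hF : Bijective F :=
    ⟨fun p q => Quotient.inductionOn₂ p q fun x y h =>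
      Quotient.sound ((syllableCode_eq_iff_mem_RW x y).1 h),
    fun z => (syllableCode_surjective z).elim fun x hx => ⟨⟦x⟧, hx⟩⟩
  have : Nontrivial (Unit ⊕ Bool × Fin n) :=
    ⟨⟨.inl (), .inr (true, ⟨0, by omega⟩), Sum.inl_ne_inr⟩⟩
  obtain ⟨e⟩ := nonempty_piNat_homeomorph_cantorSpace (Unit ⊕ Bool × Fin n)
  exact ⟨(((continuous_syllableCode.comp continuous_subtype_val).quotient_lift _).homeoOfEquivCompactToT2
    (f := Equiv.ofBijective F hF)).trans ((Homeomorph.prodCongr (.refl _) e).trans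
      (finProdCantorHomeomorph n))⟩
end
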